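/- arXiv:1703.03506 — 8 statements merged into one kernel-verified Lean document; each statement's English description precedes it below -/
import Mathlib

section
/- If V and W are partial isometries on a Hilbert space, then VW is a partial isometry if and only if the initial projection V*V commutes with the range projection WW*. -/
open ContinuousLinearMap

/-- In a C*-ring, if `p` and `q` are self-adjoint idempotents with `pqpq = pq`,
then `p` and `q` commute. -/
theorem commute_of_projections_aux {A : Type*} [NormedRing A] [StarRing A] [CStarRing A]
    (p q : A) (hp : star p = p) (hq : star q = q) (hpp : p * p = p) (hqq : q * q = q)
    (h1 : p * q * p * q = p * q) : p * q = q * p := by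
  have t1 : p * q * (q * p) = p * q * p := by
    have e : p * q * (q * p) = p * (q * q) * p := by noncomm_ring
    rw [e, hqq]
  have t2 : p * q * (p * q * p) = p * q * p := by
    have e : p * q * (p * q * p) = p * q * p * q * p := by noncomm_ring
    rw [e, h1]
  have t3 : p * (q * p) * (q * p) = p * q * p := by
    have e : p * (q * p) * (q * p) = p * q * p * q * p := by noncomm_ring
    rw [e, h1]
  have t4 : p * (q * p) * (p * q * p) = p * q * p := by
    have e : p * (q * p) * (p * q * p) = p * q * (p * p) * (q * p) := by noncomm_ring
    rw [e, hpp]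
    have e2 : p * q * p * (q * p) = p * q * p * q * p := by noncomm_ring
    rw [e2, h1]
  have h0 : star (q * p - p * q * p) * (q * p - p * q * p) = 0 := by
    have e0 : star (q * p - p * q * p) = p * q - p * (q * p) := by
      rw [star_sub, star_mul, star_mul, star_mul, hp, hq]
    rw [e0, sub_mul, mul_sub, mul_sub, t1, t2, t3, t4]
    simp
  have hqp : q * p = p * q * p := by
    rw [CStarRing.star_mul_self_eq_zero_iff] at h0
    rwa [sub_eq_zero] at h0
  have hpq : p * q = p * q * p := by
    have := congrArg star hqp
    rw [star_mul, hp, hq] at this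
    rw [star_mul, star_mul, hp, hq] at this
    exact this.trans (by noncomm_ring)
  rw [hpq, hqp]

/-- If `V` and `W` are partial isometries on a Hilbert space, then `VW` is a partial
isometry if and only if the initial projection `V*V` commutes with the range
projection `WW*`. -/
theorem partialIsometry_mul_iff_commute
    {H : Type*} [NormedAddCommGroup H] [InnerProductSpace ℂ H] [CompleteSpace H]
    (V W : H →L[ℂ] H)
    (hV : V * adjoint V * V = V) (hW : W * adjoint W * W = W) :
    (V * W) * adjoint (V * W) * (V * W) = V * W ↔
      (adjoint V * V) * (W * adjoint W) = (W * adjoint W) * (adjoint V * V) := by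
  have hV' : V * (adjoint V * V) = V := by rw [← mul_assoc]; exact hV
  have hadj : adjoint (V * W) = adjoint W * adjoint V := by
    rw [← star_eq_adjoint, star_mul, star_eq_adjoint, star_eq_adjoint]
  rw [hadj]
  constructor
  · intro h
    have hp : star (adjoint V * V) = adjoint V * V := by
      simp only [star_mul, ← star_eq_adjoint, star_star]
    have hq : star (W * adjoint W) = W * adjoint W := by
      simp only [star_mul, ← star_eq_adjoint, star_star]
    have hpp : (adjoint V * V) * (adjoint V * V) = adjoint V * V := by
      rw [mul_assoc, hV']
    have hqq : (W * adjoint W) * (W * adjoint W) = W * adjoint W := by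
      rw [← mul_assoc, hW]
    have h1 : (adjoint V * V) * (W * adjoint W) * (adjoint V * V) * (W * adjoint W)
        = (adjoint V * V) * (W * adjoint W) := by
      calc (adjoint V * V) * (W * adjoint W) * (adjoint V * V) * (W * adjoint W)
          = adjoint V * (V * W * (adjoint W * adjoint V) * (V * W)) * adjoint W := by
            noncomm_ring
        _ = adjoint V * (V * W) * adjoint W := by rw [h]
        _ = (adjoint V * V) * (W * adjoint W) := by noncomm_ring
    exact commute_of_projections_aux _ _ hp hq hpp hqq h1
  · intro h
    calc V * W * (adjoint W * adjoint V) * (V * W)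
        = V * ((W * adjoint W) * (adjoint V * V)) * W := by noncomm_ring
      _ = V * ((adjoint V * V) * (W * adjoint W)) * W := by rw [← h]
      _ = (V * (adjoint V * V)) * ((W * adjoint W) * W) := by noncomm_ring
      _ = V * W := by rw [hV', hW]
end

section
/- If T is a power partial isometry on a Hilbert space, then for all m, n ≥ 0 the projections T^m T*^m and T*^n T^n commute. -/
open ContinuousLinearMap

/-- In a C*-algebra, if `p`, `q` are self-adjoint idempotents and `q * p` is
idempotent, then `p` and `q` commute. -/
lemma commute_of_selfAdjoint_idem {E : Type*} [NonUnitalNormedRing E] [StarRing E]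
    [CStarRing E] (p q : E) (hp : p * p = p) (hq : q * q = q)
    (hsp : star p = p) (hsq : star q = q)
    (key : q * p * (q * p) = q * p) : p * q = q * p := by
  have hp' : ∀ x : E, p * (p * x) = p * x := fun x => by rw [← mul_assoc, hp]
  have hq' : ∀ x : E, q * (q * x) = q * x := fun x => by rw [← mul_assoc, hq]
  have hk' : ∀ x : E, q * (p * (q * (p * x))) = q * (p * x) := fun x => by
    simpa [mul_assoc] using congrArg (· * x) key
  have hs : star (q * p - q * p * q) = p * q - q * p * q := by
    simp [star_sub, star_mul, hsp, hsq, mul_assoc]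
  have hz : (q * p - q * p * q) * star (q * p - q * p * q) = 0 := by
    rw [hs]
    simp only [sub_mul, mul_sub, mul_assoc, hp', hq', hk']
    abel
  have hz0 : q * p - q * p * q = 0 := (CStarRing.mul_star_self_eq_zero_iff _).mp hz
  have h1 : q * p = q * p * q := by rwa [sub_eq_zero] at hz0
  have h2 : p * q = q * p * q := by
    calc p * q = star (q * p) := by rw [star_mul, hsp, hsq]
      _ = star (q * p * q) := by rw [← h1]
      _ = q * p * q := by simp [star_mul, hsp, hsq, mul_assoc]
  rw [h2, ← h1]

/-- If `T` is a power partial isometry, then all the range projections `T^m T*^m`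
commute with all the source projections `T*^n T^n`. -/
theorem powerPartialIsometry_proj_commute
    {H : Type*} [NormedAddCommGroup H] [InnerProductSpace ℂ H] [CompleteSpace H]
    (T : H →L[ℂ] H)
    (hT : ∀ n : ℕ, T ^ n * (adjoint T) ^ n * T ^ n = T ^ n) :
    ∀ m n : ℕ,
      (T ^ m * (adjoint T) ^ m) * ((adjoint T) ^ n * T ^ n) =
        ((adjoint T) ^ n * T ^ n) * (T ^ m * (adjoint T) ^ m) := by
  intro m n
  set A := adjoint T with hA
  have hstarA : star A = T := by rw [hA, star_eq_adjoint, adjoint_adjoint]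
  have hstarT : star T = A := by rw [hA, star_eq_adjoint]
  have hsp : star (T ^ m * A ^ m) = T ^ m * A ^ m := by
    rw [star_mul, star_pow, star_pow, hstarA, hstarT]
  have hsq : star (A ^ n * T ^ n) = A ^ n * T ^ n := by
    rw [star_mul, star_pow, star_pow, hstarA, hstarT]
  have hp : (T ^ m * A ^ m) * (T ^ m * A ^ m) = T ^ m * A ^ m := by
    simpa [mul_assoc] using congrArg (· * A ^ m) (hT m)
  have hq : (A ^ n * T ^ n) * (A ^ n * T ^ n) = A ^ n * T ^ n := by
    simpa [mul_assoc] using congrArg (A ^ n * ·) (hT n)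
  have hqp : (A ^ n * T ^ n) * (T ^ m * A ^ m) = A ^ n * T ^ (n + m) * A ^ m := by
    rw [pow_add]; noncomm_ring
  have key : (A ^ n * T ^ n) * (T ^ m * A ^ m) * ((A ^ n * T ^ n) * (T ^ m * A ^ m))
      = (A ^ n * T ^ n) * (T ^ m * A ^ m) := by
    rw [hqp]
    have hAm : A ^ m * A ^ n = A ^ (n + m) := by rw [← pow_add, add_comm]
    calc A ^ n * T ^ (n + m) * A ^ m * (A ^ n * T ^ (n + m) * A ^ m)
        = A ^ n * (T ^ (n + m) * (A ^ m * A ^ n) * T ^ (n + m)) * A ^ m := by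
          noncomm_ring
      _ = A ^ n * (T ^ (n + m) * A ^ (n + m) * T ^ (n + m)) * A ^ m := by rw [hAm]
      _ = A ^ n * T ^ (n + m) * A ^ m := by rw [hT (n + m)]
  exact commute_of_selfAdjoint_idem (T ^ m * A ^ m) (A ^ n * T ^ n) hp hq hsp hsq key
end

section
/- Let T be a power partial isometry on a Hilbert space H. Then a vector h satisfies Th = 0 and T*h = 0 if and only if (1 - TT*)(1 - T*T)h = h. In other words, ker T ∩ ker T* equals the range of the projection (1 - TT*)(1 - T*T). -/
/-!
A power partial isometry is in particular a partial isometry, so `T*T` and `TT*` are orthogonal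
projections, and so are `1 - T*T` and `1 - TT*`. If a product `pq` of orthogonal projections fixes
`h`, then `‖h‖ = ‖pqh‖ ≤ ‖qh‖ ≤ ‖h‖` forces `qh = h`, and then `ph = h`. Hence `T*Th = 0` and
`TT*h = 0`, that is `Th = 0` and `T*h = 0`.
-/

open ContinuousLinearMap

section PartialIsometry

variable {R : Type*} [Semigroup R] [StarMul R] {a : R}

theorem IsStarProjection.star_mul_self_of_mul_star_mul_self (ha : a * star a * a = a) :
    IsStarProjection (star a * a) where
  isIdempotentElem := by rw [IsIdempotentElem, mul_assoc, ← mul_assoc a, ha]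
  isSelfAdjoint := .star_mul_self a

theorem IsStarProjection.mul_star_self_of_mul_star_mul_self (ha : a * star a * a = a) :
    IsStarProjection (a * star a) where
  isIdempotentElem := by rw [IsIdempotentElem, ← mul_assoc, ha]
  isSelfAdjoint := .mul_star_self a

end PartialIsometry

namespace ContinuousLinearMap

variable {𝕜 E : Type*} [RCLike 𝕜] [NormedAddCommGroup E] [InnerProductSpace 𝕜 E]
  [CompleteSpace E] {p q : E →L[𝕜] E}

theorem IsStarProjection.norm_apply_le (hp : IsStarProjection p) (x : E) : ‖p x‖ ≤ ‖x‖ := by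
  obtain ⟨K, _, rfl⟩ := isStarProjection_iff_eq_starProjection.mp hp
  exact K.norm_starProjection_apply_le x

theorem IsStarProjection.apply_eq_self_of_norm_le (hp : IsStarProjection p) {x : E}
    (hx : ‖x‖ ≤ ‖p x‖) : p x = x := by
  obtain ⟨K, _, rfl⟩ := isStarProjection_iff_eq_starProjection.mp hp
  exact K.starProjection_eq_self_iff.mpr <|
    (K.mem_iff_norm_starProjection x).mpr (le_antisymm (K.norm_starProjection_apply_le x) hx)

theorem IsStarProjection.apply_eq_self_of_mul_apply_eq_self (hp : IsStarProjection p)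
    (hq : IsStarProjection q) {x : E} (h : (p * q) x = x) : p x = x ∧ q x = x := by
  have hqx : q x = x := hq.apply_eq_self_of_norm_le <|
    calc ‖x‖ = ‖p (q x)‖ := by rw [← mul_apply_eq_comp, h]
      _ ≤ ‖q x‖ := hp.norm_apply_le _
  exact ⟨by rwa [mul_apply_eq_comp, hqx] at h, hqx⟩

end ContinuousLinearMap

/-- For a power partial isometry `T`, a vector `h` satisfies `T h = 0` and `T* h = 0`
if and only if `(1 - TT*)(1 - T*T) h = h`. -/
theorem ker_inter_ker_adjoint_eq_range_proj
    {H : Type*} [NormedAddCommGroup H] [InnerProductSpace ℂ H] [CompleteSpace H]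
    (T : H →L[ℂ] H)
    (hT : ∀ n : ℕ, T ^ n * (adjoint T) ^ n * T ^ n = T ^ n) :
    ∀ h : H, (T h = 0 ∧ adjoint T h = 0) ↔
      ((1 - T * adjoint T) * (1 - adjoint T * T)) h = h := by
  have hpi : T * star T * T = T := by simpa [star_eq_adjoint] using hT 1
  have hQ := (IsStarProjection.mul_star_self_of_mul_star_mul_self hpi).one_sub
  have hP := (IsStarProjection.star_mul_self_of_mul_star_mul_self hpi).one_sub
  rw [star_eq_adjoint] at hP hQ
  intro h
  constructor
  · rintro ⟨hTh, hTadh⟩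
    simp [hTh, hTadh]
  · intro hh
    obtain ⟨hQh, hPh⟩ := hQ.apply_eq_self_of_mul_apply_eq_self hP hh
    have hT_ker : h ∈ (adjoint T ∘L T).ker := by simpa using hPh
    have hadj_ker : h ∈ (T ∘L adjoint T).ker := by simpa using hQh
    rw [ker_adjoint_comp_self] at hT_ker
    rw [ker_self_comp_adjoint] at hadj_ker
    exact ⟨hT_ker, hadj_ker⟩
end

section
/- Let T be a power partial isometry on a Hilbert space H, let P be the orthogonal projection onto ⋂_{n≥1} T^n H and Q the orthogonal projection onto ⋂_{n≥1} T*^n H. Then PQ = QP. -/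
/-!
`Eₙ = Tⁿ T*ⁿ` and `Fₙ = T*ⁿ Tⁿ` are the orthogonal projections onto `Tⁿ H` and `T*ⁿ H`.
Because `Tⁿ⁺ᵐ` is a partial isometry, `Fₙ Eₘ Fₙ` is idempotent, and in a C*-algebra this forces
`Fₙ` and `Eₘ` to commute. A self-adjoint operator leaving the range of a self-adjoint projection
invariant commutes with it. So every `Eₘ` leaves `⋂ T*ⁿ H` invariant and commutes with `Q`; hence
`Q` leaves every `Tⁿ H`, thus `⋂ Tⁿ H`, invariant and commutes with `P`.
-/

open ContinuousLinearMap

def IsPowerPartialIsometry {R : Type*} [Monoid R] [Star R] (t : R) : Prop :=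
  ∀ n : ℕ, t ^ n * star t ^ n * t ^ n = t ^ n

theorem IsSelfAdjoint.commute_of_mul_mul_eq {R : Type*} [Semigroup R] [StarMul R] {a b : R}
    (ha : IsSelfAdjoint a) (hb : IsSelfAdjoint b) (h : b * a * b = a * b) : Commute a b := by
  have hab : IsSelfAdjoint (a * b) := by simpa only [hb.star_eq, h] using ha.conjugate b
  calc a * b = star (a * b) := hab.star_eq.symm
    _ = b * a := by rw [star_mul, ha.star_eq, hb.star_eq]

theorem IsStarProjection.commute_of_isIdempotentElem_mul_mul {A : Type*} [NonUnitalNormedRing A]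
    [StarRing A] [CStarRing A] {p q : A} (hp : IsStarProjection p) (hq : IsStarProjection q)
    (h : IsIdempotentElem (p * q * p)) : Commute p q := by
  have h5 : p * q * p * q * p = p * q * p := by
    conv_rhs => rw [← h.eq]
    rw [show p * q * p * (p * q * p) = p * q * (p * p) * q * p by noncomm_ring,
      hp.isIdempotentElem.eq]
  have key : star (q * p - p * q * p) * (q * p - p * q * p) = 0 := by
    rw [star_sub, star_mul, star_mul, star_mul, hp.isSelfAdjoint.star_eq,
      hq.isSelfAdjoint.star_eq,
      show (p * q - p * (q * p)) * (q * p - p * q * p)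
        = p * (q * q) * p - p * q * p * q * p - p * q * p * q * p + p * q * (p * p) * q * p by
        noncomm_ring,
      hq.isIdempotentElem.eq, hp.isIdempotentElem.eq, h5]
    abel
  have hqp : q * p = p * q * p := sub_eq_zero.mp ((CStarRing.star_mul_self_eq_zero_iff _).mp key)
  have hpq : p * q = p * q * p := by
    simpa only [star_mul, hp.isSelfAdjoint.star_eq, hq.isSelfAdjoint.star_eq, mul_assoc]
      using congr(star $hqp)
  exact hpq.trans hqp.symm

theorem isStarProjection_mul_star {R : Type*} [Monoid R] [StarMul R] {a : R}
    (h : a * star a * a = a) : IsStarProjection (a * star a) where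
  isIdempotentElem := by rw [IsIdempotentElem, ← mul_assoc, h]
  isSelfAdjoint := .mul_star_self a

namespace IsPowerPartialIsometry

section Monoid

variable {R : Type*} [Monoid R] [StarMul R] {t : R}

theorem star_pow_mul_pow_mul_star_pow (ht : IsPowerPartialIsometry t) (n : ℕ) :
    star t ^ n * t ^ n * star t ^ n = star t ^ n := by
  simpa only [star_mul, star_pow, star_star, mul_assoc] using congr(star $(ht n))

theorem isStarProjection_pow_mul_star_pow (ht : IsPowerPartialIsometry t) (n : ℕ) :
    IsStarProjection (t ^ n * star t ^ n) := by
  simpa only [star_pow] using isStarProjection_mul_star (a := t ^ n) (by rw [star_pow]; exact ht n)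

theorem isStarProjection_star_pow_mul_pow (ht : IsPowerPartialIsometry t) (n : ℕ) :
    IsStarProjection (star t ^ n * t ^ n) := by
  simpa only [star_pow, star_star] using isStarProjection_mul_star (a := star t ^ n)
    (by rw [star_pow, star_star]; exact ht.star_pow_mul_pow_mul_star_pow n)

theorem isIdempotentElem_star_pow_mul_pow_mul_pow_mul_star_pow (ht : IsPowerPartialIsometry t)
    (n m : ℕ) :
    IsIdempotentElem (star t ^ n * t ^ n * (t ^ m * star t ^ m) * (star t ^ n * t ^ n)) := by
  have hn : ∀ x, t ^ n * (star t ^ n * (t ^ n * x)) = t ^ n * x := fun x => by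
    rw [← mul_assoc, ← mul_assoc, ht n]
  have hnm : ∀ x, t ^ n * (t ^ m * (star t ^ m * (star t ^ n * (t ^ n * (t ^ m * x)))))
      = t ^ n * (t ^ m * x) := fun x => by
    have := ht (n + m)
    rw [pow_add t, add_comm n m, pow_add (star t)] at this
    simp only [← mul_assoc] at this ⊢
    rw [this]
  simp only [IsIdempotentElem, mul_assoc, hn, hnm]

end Monoid

theorem commute_star_pow_mul_pow_pow_mul_star_pow {A : Type*} [NormedRing A] [StarRing A]
    [CStarRing A] {t : A} (ht : IsPowerPartialIsometry t) (n m : ℕ) :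
    Commute (star t ^ n * t ^ n) (t ^ m * star t ^ m) :=
  (ht.isStarProjection_star_pow_mul_pow n).commute_of_isIdempotentElem_mul_mul
    (ht.isStarProjection_pow_mul_star_pow m)
    (ht.isIdempotentElem_star_pow_mul_pow_mul_pow_mul_star_pow n m)

end IsPowerPartialIsometry

namespace ContinuousLinearMap

theorem apply_mem_range_of_commute {R M : Type*} [Semiring R] [TopologicalSpace M]
    [AddCommMonoid M] [Module R M] {a b c : M →L[R] M} (hb : b * c * b = b)
    (ha : Commute a (b * c)) {x : M} (hx : x ∈ LinearMap.range (b : M →ₗ[R] M)) :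
    a x ∈ LinearMap.range (b : M →ₗ[R] M) := by
  obtain ⟨y, rfl⟩ := hx
  refine ⟨c (a (b y)), ?_⟩
  calc b (c (a (b y))) = (b * c * a * b) y := rfl
    _ = (a * (b * c * b)) y := by rw [← ha.eq]; simp only [mul_assoc]
    _ = a (b y) := by rw [hb]; rfl

theorem apply_mem_iInf_range_of_commute {ι R M : Type*} [Semiring R] [TopologicalSpace M]
    [AddCommMonoid M] [Module R M] {a : M →L[R] M} {b c : ι → M →L[R] M}
    (hb : ∀ i, b i * c i * b i = b i) (ha : ∀ i, Commute a (b i * c i)) {x : M}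
    (hx : x ∈ ⨅ i, LinearMap.range (b i : M →ₗ[R] M)) :
    a x ∈ ⨅ i, LinearMap.range (b i : M →ₗ[R] M) := by
  simp only [Submodule.mem_iInf] at hx ⊢
  exact fun i => apply_mem_range_of_commute (hb i) (ha i) (hx i)

theorem commute_of_isSelfAdjoint_of_mapsTo {𝕜 E : Type*} [RCLike 𝕜] [NormedAddCommGroup E]
    [InnerProductSpace 𝕜 E] [CompleteSpace E] {p a : E →L[𝕜] E} {K : Set E}
    (hp : IsSelfAdjoint p) (ha : IsSelfAdjoint a) (hpK : ∀ x, p x ∈ K)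
    (hpfix : ∀ x ∈ K, p x = x) (haK : Set.MapsTo a K K) : Commute a p :=
  ha.commute_of_mul_mul_eq hp <| ext fun x => hpfix _ (haK (hpK x))

end ContinuousLinearMap

/-- For a power partial isometry `T`, the orthogonal projections `P` onto
`⋂_{n≥1} T^n H` and `Q` onto `⋂_{n≥1} T*^n H` commute. -/
theorem orthogonalProjections_commute
    {H : Type*} [NormedAddCommGroup H] [InnerProductSpace ℂ H] [CompleteSpace H]
    (T : H →L[ℂ] H)
    (hT : ∀ n : ℕ, T ^ n * (adjoint T) ^ n * T ^ n = T ^ n)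
    (P Q : H →L[ℂ] H)
    -- `P` is the orthogonal projection onto `⋂_{n ≥ 1} T^n H`:
    (hPsa : IsSelfAdjoint P)
    (hPfix : ∀ x ∈ ⨅ n : ℕ, LinearMap.range ((T ^ (n + 1) : H →L[ℂ] H) : H →ₗ[ℂ] H), P x = x)
    (hPrange : ∀ x : H, P x ∈ ⨅ n : ℕ, LinearMap.range ((T ^ (n + 1) : H →L[ℂ] H) : H →ₗ[ℂ] H))
    -- `Q` is the orthogonal projection onto `⋂_{n ≥ 1} T*^n H`:
    (hQsa : IsSelfAdjoint Q)
    (hQfix : ∀ x ∈ ⨅ n : ℕ, LinearMap.range (((adjoint T) ^ (n + 1) : H →L[ℂ] H) : H →ₗ[ℂ] H), Q x = x)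
    (hQrange : ∀ x : H, Q x ∈ ⨅ n : ℕ, LinearMap.range (((adjoint T) ^ (n + 1) : H →L[ℂ] H) : H →ₗ[ℂ] H)) :
    P * Q = Q * P := by
  have ht : IsPowerPartialIsometry T := hT
  have hQE (m : ℕ) : Commute (T ^ m * star T ^ m) Q :=
    commute_of_isSelfAdjoint_of_mapsTo hQsa (ht.isStarProjection_pow_mul_star_pow m).isSelfAdjoint
      hQrange hQfix fun _ hx =>
        apply_mem_iInf_range_of_commute (fun n => ht.star_pow_mul_pow_mul_star_pow (n + 1))
          (fun n => (ht.commute_star_pow_mul_pow_pow_mul_star_pow (n + 1) m).symm) hx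
  refine (commute_of_isSelfAdjoint_of_mapsTo hPsa hQsa hPrange hPfix fun _ hx => ?_).symm.eq
  exact apply_mem_iInf_range_of_commute (fun n => ht (n + 1)) (fun n => (hQE (n + 1)).symm) hx
end

section
/- Let T be a power partial isometry on a Hilbert space H. Then for all n ≥ 1, T (T*^n T^n) = (T*^{n-1} T^{n-1}) T. -/
open ContinuousLinearMap

lemma power_pi_aux {A : Type*} [NormedRing A] [StarRing A] [CStarRing A]
    (t s : A) (hst : star t = s) (m : ℕ)
    (h1 : t * s * t = t)
    (hm : t ^ m * s ^ m * t ^ m = t ^ m)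
    (hm1 : t ^ (m + 1) * s ^ (m + 1) * t ^ (m + 1) = t ^ (m + 1)) :
    t * (s ^ (m + 1) * t ^ (m + 1)) = s ^ m * t ^ m * t := by
  have hts : star s = t := by rw [← hst, star_star]
  -- self-adjointness facts
  have hsE : star (s ^ (m + 1) * t ^ (m + 1)) = s ^ (m + 1) * t ^ (m + 1) := by
    rw [star_mul, star_pow, star_pow, hst, hts]
  have hsEm : star (s ^ m * t ^ m) = s ^ m * t ^ m := by
    rw [star_mul, star_pow, star_pow, hst, hts]
  have hsf : star (t * s) = t * s := by rw [star_mul, hst, hts]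
  -- idempotents
  have hE2 : (s ^ (m + 1) * t ^ (m + 1)) * (s ^ (m + 1) * t ^ (m + 1)) =
      s ^ (m + 1) * t ^ (m + 1) := by
    calc (s ^ (m + 1) * t ^ (m + 1)) * (s ^ (m + 1) * t ^ (m + 1))
        = s ^ (m + 1) * (t ^ (m + 1) * s ^ (m + 1) * t ^ (m + 1)) := by noncomm_ring
      _ = s ^ (m + 1) * t ^ (m + 1) := by rw [hm1]
  have hEm2 : (s ^ m * t ^ m) * (s ^ m * t ^ m) = s ^ m * t ^ m := by
    calc (s ^ m * t ^ m) * (s ^ m * t ^ m)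
        = s ^ m * (t ^ m * s ^ m * t ^ m) := by noncomm_ring
      _ = s ^ m * t ^ m := by rw [hm]
  have hF2 : (t * s) * (t * s) = t * s := by
    calc (t * s) * (t * s) = (t * s * t) * s := by noncomm_ring
      _ = t * s := by rw [h1]
  -- t^(m+1) * s * t = t^(m+1)
  have hTsucc : t ^ (m + 1) * s * t = t ^ (m + 1) := by
    calc t ^ (m + 1) * s * t = t ^ m * (t * s * t) := by rw [pow_succ]; noncomm_ring
      _ = t ^ m * t := by rw [h1]
      _ = t ^ (m + 1) := by rw [pow_succ]
  -- (c): Em * t * E = Em * t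
  have hc : (s ^ m * t ^ m) * t * (s ^ (m + 1) * t ^ (m + 1)) = s ^ m * t ^ m * t := by
    calc (s ^ m * t ^ m) * t * (s ^ (m + 1) * t ^ (m + 1))
        = s ^ m * (t ^ (m + 1) * s ^ (m + 1) * t ^ (m + 1)) := by
          rw [pow_succ t m]; noncomm_ring
      _ = s ^ m * t ^ (m + 1) := by rw [hm1]
      _ = s ^ m * t ^ m * t := by rw [pow_succ, mul_assoc]
  -- adjoint of hm1 : s^(m+1) * t^(m+1) * s^(m+1) = s^(m+1)
  have hm1' : s ^ (m + 1) * t ^ (m + 1) * s ^ (m + 1) = s ^ (m + 1) := by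
    have h := congrArg star hm1
    simp only [star_mul, star_pow, hst, hts] at h
    calc s ^ (m + 1) * t ^ (m + 1) * s ^ (m + 1)
        = s ^ (m + 1) * (t ^ (m + 1) * s ^ (m + 1)) := by rw [mul_assoc]
      _ = s ^ (m + 1) := h
  -- (d): E * s * Em = s * Em
  have hd : (s ^ (m + 1) * t ^ (m + 1)) * s * (s ^ m * t ^ m) = s * (s ^ m * t ^ m) := by
    calc (s ^ (m + 1) * t ^ (m + 1)) * s * (s ^ m * t ^ m)
        = (s ^ (m + 1) * t ^ (m + 1) * s ^ (m + 1)) * t ^ m := by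
          rw [pow_succ' s m]; noncomm_ring
      _ = s ^ (m + 1) * t ^ m := by rw [hm1']
      _ = s * (s ^ m * t ^ m) := by rw [pow_succ' s m]; noncomm_ring
  -- R = f * Em * f where f = t * s
  have hRF : (t * s) * (s ^ m * t ^ m) * (t * s) =
      t * (s ^ (m + 1) * t ^ (m + 1)) * s := by
    rw [pow_succ' s m, pow_succ t m]; noncomm_ring
  -- E * s * t * E = E
  have hESTE : (s ^ (m + 1) * t ^ (m + 1)) * s * t * (s ^ (m + 1) * t ^ (m + 1)) =
      s ^ (m + 1) * t ^ (m + 1) := by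
    calc (s ^ (m + 1) * t ^ (m + 1)) * s * t * (s ^ (m + 1) * t ^ (m + 1))
        = s ^ (m + 1) * (t ^ (m + 1) * s * t) * (s ^ (m + 1) * t ^ (m + 1)) := by
          noncomm_ring
      _ = s ^ (m + 1) * t ^ (m + 1) * (s ^ (m + 1) * t ^ (m + 1)) := by rw [hTsucc]
      _ = s ^ (m + 1) * t ^ (m + 1) := hE2
  -- R is idempotent
  have hR2 : (t * (s ^ (m + 1) * t ^ (m + 1)) * s) * (t * (s ^ (m + 1) * t ^ (m + 1)) * s) =
      t * (s ^ (m + 1) * t ^ (m + 1)) * s := by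
    calc (t * (s ^ (m + 1) * t ^ (m + 1)) * s) * (t * (s ^ (m + 1) * t ^ (m + 1)) * s)
        = t * ((s ^ (m + 1) * t ^ (m + 1)) * s * t * (s ^ (m + 1) * t ^ (m + 1))) * s := by
          noncomm_ring
      _ = t * (s ^ (m + 1) * t ^ (m + 1)) * s := by rw [hESTE]
  -- star R = R
  have hsR : star (t * (s ^ (m + 1) * t ^ (m + 1)) * s) =
      t * (s ^ (m + 1) * t ^ (m + 1)) * s := by
    simp only [star_mul, star_pow, hst, hts]
    noncomm_ring
  -- abbreviate for readability in comments: E = s^(m+1)*t^(m+1), Em = s^m*t^m, f = t*s,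
  -- R = t*E*s
  -- key projection product
  have hQ : (t * s) * (s ^ m * t ^ m) * (t * s) * ((s ^ m * t ^ m) * (t * s)) =
      t * (s ^ (m + 1) * t ^ (m + 1)) * s := by
    have k1 : (t * s) * (s ^ m * t ^ m) * (t * s) * ((s ^ m * t ^ m) * (t * s)) =
        (t * s) * (s ^ m * t ^ m) * ((t * s) * (t * s)) * ((s ^ m * t ^ m) * (t * s)) := by
      rw [hF2]
    rw [k1]
    calc (t * s) * (s ^ m * t ^ m) * ((t * s) * (t * s)) * ((s ^ m * t ^ m) * (t * s))
        = ((t * s) * (s ^ m * t ^ m) * (t * s)) * ((t * s) * (s ^ m * t ^ m) * (t * s)) := by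
          noncomm_ring
      _ = (t * (s ^ (m + 1) * t ^ (m + 1)) * s) * (t * (s ^ (m + 1) * t ^ (m + 1)) * s) := by
          rw [hRF]
      _ = t * (s ^ (m + 1) * t ^ (m + 1)) * s := hR2
  -- Em * f = R via the C*-identity
  have hEmF : (s ^ m * t ^ m) * (t * s) = t * (s ^ (m + 1) * t ^ (m + 1)) * s := by
    have hsD : star ((s ^ m * t ^ m) * (t * s) - (t * s) * (s ^ m * t ^ m) * (t * s)) =
        (t * s) * (s ^ m * t ^ m) - (t * s) * ((s ^ m * t ^ m) * (t * s)) := by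
      simp only [star_sub, star_mul, star_pow, hst, hts]
    have t1 : (t * s) * (s ^ m * t ^ m) * ((s ^ m * t ^ m) * (t * s)) =
        t * (s ^ (m + 1) * t ^ (m + 1)) * s := by
      calc (t * s) * (s ^ m * t ^ m) * ((s ^ m * t ^ m) * (t * s))
          = (t * s) * ((s ^ m * t ^ m) * (s ^ m * t ^ m)) * (t * s) := by noncomm_ring
        _ = (t * s) * (s ^ m * t ^ m) * (t * s) := by rw [hEm2]
        _ = t * (s ^ (m + 1) * t ^ (m + 1)) * s := hRF
    have t2 : (t * s) * (s ^ m * t ^ m) * ((t * s) * (s ^ m * t ^ m) * (t * s)) =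
        t * (s ^ (m + 1) * t ^ (m + 1)) * s := by
      calc (t * s) * (s ^ m * t ^ m) * ((t * s) * (s ^ m * t ^ m) * (t * s))
          = (t * s) * (s ^ m * t ^ m) * (t * s) * ((s ^ m * t ^ m) * (t * s)) := by
            noncomm_ring
        _ = t * (s ^ (m + 1) * t ^ (m + 1)) * s := hQ
    have t3 : (t * s) * ((s ^ m * t ^ m) * (t * s)) * ((s ^ m * t ^ m) * (t * s)) =
        t * (s ^ (m + 1) * t ^ (m + 1)) * s := by
      calc (t * s) * ((s ^ m * t ^ m) * (t * s)) * ((s ^ m * t ^ m) * (t * s))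
          = (t * s) * (s ^ m * t ^ m) * (t * s) * ((s ^ m * t ^ m) * (t * s)) := by
            noncomm_ring
        _ = t * (s ^ (m + 1) * t ^ (m + 1)) * s := hQ
    have t4 : (t * s) * ((s ^ m * t ^ m) * (t * s)) * ((t * s) * (s ^ m * t ^ m) * (t * s)) =
        t * (s ^ (m + 1) * t ^ (m + 1)) * s := by
      have k1 : (t * s) * ((s ^ m * t ^ m) * (t * s)) * ((t * s) * (s ^ m * t ^ m) * (t * s)) =
          ((t * s) * (s ^ m * t ^ m) * (t * s)) * ((t * s) * (s ^ m * t ^ m) * (t * s)) := by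
        noncomm_ring
      rw [k1, hRF, hR2]
    have hzero : star ((s ^ m * t ^ m) * (t * s) - (t * s) * (s ^ m * t ^ m) * (t * s)) *
        ((s ^ m * t ^ m) * (t * s) - (t * s) * (s ^ m * t ^ m) * (t * s)) = 0 := by
      rw [hsD, sub_mul, mul_sub, mul_sub, t1, t2, t3, t4]
      abel
    have h0 := (CStarRing.star_mul_self_eq_zero_iff _).mp hzero
    have h0' := sub_eq_zero.mp h0
    rw [h0', hRF]
  -- f * Em = R by taking stars
  have hFEm : (t * s) * (s ^ m * t ^ m) = t * (s ^ (m + 1) * t ^ (m + 1)) * s := by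
    have h := congrArg star hEmF
    simp only [star_mul, star_pow, hst, hts] at h
    exact h.trans (by noncomm_ring)
  -- R * Em = R
  have hREm : (t * (s ^ (m + 1) * t ^ (m + 1)) * s) * (s ^ m * t ^ m) =
      t * (s ^ (m + 1) * t ^ (m + 1)) * s := by
    rw [← hFEm, mul_assoc, hEm2]
  -- the final computation: X = t*E - Em*t, show X * star X = 0
  have hsX : star (t * (s ^ (m + 1) * t ^ (m + 1)) - (s ^ m * t ^ m) * t) =
      (s ^ (m + 1) * t ^ (m + 1)) * s - s * (s ^ m * t ^ m) := by
    simp only [star_sub, star_mul, star_pow, hst, hts]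
  have b1 : t * (s ^ (m + 1) * t ^ (m + 1)) * ((s ^ (m + 1) * t ^ (m + 1)) * s) =
      t * (s ^ (m + 1) * t ^ (m + 1)) * s := by
    calc t * (s ^ (m + 1) * t ^ (m + 1)) * ((s ^ (m + 1) * t ^ (m + 1)) * s)
        = t * ((s ^ (m + 1) * t ^ (m + 1)) * (s ^ (m + 1) * t ^ (m + 1))) * s := by
          noncomm_ring
      _ = t * (s ^ (m + 1) * t ^ (m + 1)) * s := by rw [hE2]
  have b2 : t * (s ^ (m + 1) * t ^ (m + 1)) * (s * (s ^ m * t ^ m)) =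
      t * (s ^ (m + 1) * t ^ (m + 1)) * s := by
    calc t * (s ^ (m + 1) * t ^ (m + 1)) * (s * (s ^ m * t ^ m))
        = t * ((s ^ (m + 1) * t ^ (m + 1)) * s * (s ^ m * t ^ m)) := by noncomm_ring
      _ = t * (s * (s ^ m * t ^ m)) := by rw [hd]
      _ = (t * s) * (s ^ m * t ^ m) := by noncomm_ring
      _ = t * (s ^ (m + 1) * t ^ (m + 1)) * s := hFEm
  have b3 : (s ^ m * t ^ m) * t * ((s ^ (m + 1) * t ^ (m + 1)) * s) =
      t * (s ^ (m + 1) * t ^ (m + 1)) * s := by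
    calc (s ^ m * t ^ m) * t * ((s ^ (m + 1) * t ^ (m + 1)) * s)
        = (s ^ m * t ^ m) * t * (s ^ (m + 1) * t ^ (m + 1)) * s := by noncomm_ring
      _ = s ^ m * t ^ m * t * s := by rw [hc]
      _ = (s ^ m * t ^ m) * (t * s) := by noncomm_ring
      _ = t * (s ^ (m + 1) * t ^ (m + 1)) * s := hEmF
  have b4 : (s ^ m * t ^ m) * t * (s * (s ^ m * t ^ m)) =
      t * (s ^ (m + 1) * t ^ (m + 1)) * s := by
    calc (s ^ m * t ^ m) * t * (s * (s ^ m * t ^ m))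
        = (s ^ m * t ^ m) * (t * s) * (s ^ m * t ^ m) := by noncomm_ring
      _ = (t * (s ^ (m + 1) * t ^ (m + 1)) * s) * (s ^ m * t ^ m) := by rw [hEmF]
      _ = t * (s ^ (m + 1) * t ^ (m + 1)) * s := hREm
  have hzero2 : (t * (s ^ (m + 1) * t ^ (m + 1)) - (s ^ m * t ^ m) * t) *
      star (t * (s ^ (m + 1) * t ^ (m + 1)) - (s ^ m * t ^ m) * t) = 0 := by
    rw [hsX, sub_mul, mul_sub, mul_sub, b1, b2, b3, b4]
    abel
  have hX0 := (CStarRing.mul_star_self_eq_zero_iff _).mp hzero2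
  exact sub_eq_zero.mp hX0

/-- For a power partial isometry `T` and `n ≥ 1` we have
`T (T*^n T^n) = (T*^{n-1} T^{n-1}) T`. -/
theorem mul_source_proj_eq
    {H : Type*} [NormedAddCommGroup H] [InnerProductSpace ℂ H] [CompleteSpace H]
    (T : H →L[ℂ] H)
    (hT : ∀ n : ℕ, T ^ n * (adjoint T) ^ n * T ^ n = T ^ n) :
    ∀ n : ℕ, 1 ≤ n →
      T * ((adjoint T) ^ n * T ^ n) = ((adjoint T) ^ (n - 1) * T ^ (n - 1)) * T := by
  intro n hn
  obtain ⟨m, rfl⟩ : ∃ m, n = m + 1 := ⟨n - 1, (Nat.succ_pred_eq_of_pos hn).symm⟩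
  simp only [Nat.add_sub_cancel]
  exact power_pi_aux T (adjoint T) (star_eq_adjoint T) m (by simpa using hT 1)
    (hT m) (hT (m + 1))
end

section
/- Let T be a power partial isometry on a Hilbert space H. Then for all n, m ≥ 0: T*^n (T^m T*^m − T^{m+1} T*^{m+1}) = 0 if n > m, and equals (T^{m−n} T*^{m−n} − T^{m−n+1} T*^{m−n+1}) T*^n if n ≤ m. -/
open ContinuousLinearMap

section Aux

variable {H : Type*} [NormedAddCommGroup H] [InnerProductSpace ℂ H] [CompleteSpace H]

private lemma adjoint_pow' (T : H →L[ℂ] H) (n : ℕ) :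
    adjoint (T ^ n) = (adjoint T) ^ n := by
  induction n with
  | zero =>
      simp only [pow_zero]
      exact adjoint_id
  | succ k ih =>
      rw [pow_succ, mul_def, adjoint_comp, ih, pow_succ', mul_def]

private lemma eq_zero_of_adjoint_mul_self (A : H →L[ℂ] H)
    (h : adjoint A * A = 0) : A = 0 := by
  have h2 := norm_adjoint_comp_self A
  rw [show adjoint A ∘L A = adjoint A * A from rfl, h, norm_zero] at h2
  have : ‖A‖ = 0 := by nlinarith [norm_nonneg A]
  exact norm_eq_zero.mp this

end Aux

/-- For a power partial isometry `T`:
`T*^n (T^m T*^m − T^{m+1} T*^{m+1})` is `0` if `n > m`, and equals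
`(T^{m−n} T*^{m−n} − T^{m−n+1} T*^{m−n+1}) T*^n` if `n ≤ m`. -/
theorem adjoint_pow_mul_range_proj_difference
    {H : Type*} [NormedAddCommGroup H] [InnerProductSpace ℂ H] [CompleteSpace H]
    (T : H →L[ℂ] H)
    (hT : ∀ n : ℕ, T ^ n * (adjoint T) ^ n * T ^ n = T ^ n) :
    ∀ n m : ℕ,
      (n > m →
        (adjoint T) ^ n * (T ^ m * (adjoint T) ^ m - T ^ (m + 1) * (adjoint T) ^ (m + 1))
          = 0) ∧
      (n ≤ m →
        (adjoint T) ^ n * (T ^ m * (adjoint T) ^ m - T ^ (m + 1) * (adjoint T) ^ (m + 1))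
          = (T ^ (m - n) * (adjoint T) ^ (m - n)
              - T ^ (m - n + 1) * (adjoint T) ^ (m - n + 1)) * (adjoint T) ^ n) := by
  set S := adjoint T with hS
  have hSstar : S = star T := (star_eq_adjoint T).symm
  have hTstar : star S = T := by rw [hSstar, star_star]
  -- adjoint relation
  have hT' : ∀ n : ℕ, S ^ n * T ^ n * S ^ n = S ^ n := by
    intro n
    have h := congrArg star (hT n)
    simp only [star_mul, star_pow, hTstar, ← hSstar] at h
    rw [mul_assoc]; exact h
  -- projections
  have hProj : ∀ m : ℕ, (T ^ m * S ^ m) * (T ^ m * S ^ m) = T ^ m * S ^ m := by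
    intro m
    calc (T ^ m * S ^ m) * (T ^ m * S ^ m) = (T ^ m * S ^ m * T ^ m) * S ^ m := by
          noncomm_ring
    _ = T ^ m * S ^ m := by rw [hT m]
  -- TT*T^{m+1} = T^{m+1}
  have hTST : ∀ m : ℕ, T * S * T ^ (m + 1) = T ^ (m + 1) := by
    intro m
    have h1 := hT 1
    rw [pow_one, pow_one] at h1
    calc T * S * T ^ (m + 1) = (T * S * T) * T ^ m := by
          rw [pow_succ']; noncomm_ring
    _ = T ^ (m + 1) := by rw [h1, pow_succ']
  -- the key commutation lemma
  have key : ∀ m : ℕ, S * (T ^ (m + 1) * S ^ (m + 1)) = (T ^ m * S ^ m) * S := by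
    intro m
    set P := T ^ (m + 1) * S ^ (m + 1) with hP
    set Q := T ^ m * S ^ m with hQ
    set A := S * P - Q * S with hA
    have hPsa : star P = P := by
      rw [hP, star_mul, star_pow, star_pow, hTstar, ← hSstar]
    have hQsa : star Q = Q := by
      rw [hQ, star_mul, star_pow, star_pow, hTstar, ← hSstar]
    have hadjA : adjoint A = P * T - T * Q := by
      rw [← star_eq_adjoint, hA, hP, hQ]
      simp only [star_sub, star_mul, star_pow, hTstar, ← hSstar]
    have hTQS : T * Q * S = P := by
      rw [hQ, hP, pow_succ', pow_succ]; noncomm_ring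
    have hTSP : T * S * P = P := by
      rw [hP, ← mul_assoc, hTST m]
    have hAA : adjoint A * A = 0 := by
      rw [hadjA, hA]
      have e1 : (P * T - T * Q) * (S * P - Q * S)
          = P * (T * S * P) - P * (T * Q * S) - (T * Q * S) * P + T * (Q * Q) * S := by
        noncomm_ring
      rw [e1, hTSP, hTQS, hProj m, ← hQ, hTQS, hProj (m + 1), ← hP]
      abel
    have hA0 : A = 0 := eq_zero_of_adjoint_mul_self A hAA
    exact sub_eq_zero.mp (hA ▸ hA0)
  -- general: S^n * P_m = P_{m-n} * S^n for n ≤ m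
  have keyn : ∀ n m : ℕ, n ≤ m →
      S ^ n * (T ^ m * S ^ m) = (T ^ (m - n) * S ^ (m - n)) * S ^ n := by
    intro n
    induction n with
    | zero => intro m _; simp
    | succ k ih =>
        intro m hm
        have hk : k ≤ m := Nat.le_of_succ_le hm
        obtain ⟨j, hj⟩ : ∃ j, m - k = j + 1 := ⟨m - k - 1, by omega⟩
        have hj2 : m - (k + 1) = j := by omega
        calc S ^ (k + 1) * (T ^ m * S ^ m)
            = S * (S ^ k * (T ^ m * S ^ m)) := by rw [pow_succ']; noncomm_ring
          _ = S * ((T ^ (m - k) * S ^ (m - k)) * S ^ k) := by rw [ih m hk]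
          _ = (S * (T ^ (j + 1) * S ^ (j + 1))) * S ^ k := by rw [hj]; noncomm_ring
          _ = ((T ^ j * S ^ j) * S) * S ^ k := by rw [key j]
          _ = (T ^ (m - (k + 1)) * S ^ (m - (k + 1))) * S ^ (k + 1) := by
              rw [hj2, pow_succ']; noncomm_ring
  -- S^{m+1} annihilates both projections
  have hann : ∀ m : ℕ, S ^ (m + 1) * (T ^ m * S ^ m) = S ^ (m + 1) := by
    intro m
    calc S ^ (m + 1) * (T ^ m * S ^ m) = S * (S ^ m * T ^ m * S ^ m) := by
          rw [pow_succ']; noncomm_ring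
      _ = S ^ (m + 1) := by rw [hT' m, pow_succ']
  have hann' : ∀ m : ℕ, S ^ (m + 1) * (T ^ (m + 1) * S ^ (m + 1)) = S ^ (m + 1) := by
    intro m
    calc S ^ (m + 1) * (T ^ (m + 1) * S ^ (m + 1))
        = S ^ (m + 1) * T ^ (m + 1) * S ^ (m + 1) := by noncomm_ring
      _ = S ^ (m + 1) := hT' (m + 1)
  intro n m
  constructor
  · intro hnm
    obtain ⟨r, hr⟩ : ∃ r, n = r + (m + 1) := ⟨n - (m + 1), by omega⟩
    rw [hr, pow_add, mul_assoc, mul_sub, hann m, hann' m, sub_self, mul_zero]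
  · intro hnm
    rw [mul_sub, keyn n m hnm, keyn n (m + 1) (by omega), sub_mul]
    have h : m + 1 - n = m - n + 1 := by omega
    rw [h]
end

section
/- Let T be a power partial isometry on a Hilbert space H and p ≥ 2. Define P_n = (T^{n−1} T*^{n−1} − T^n T*^n)(T*^{p−n} T^{p−n} − T*^{p−n+1} T^{p−n+1}) for 1 ≤ n ≤ p. Then the P_n are mutually orthogonal projections and T^{n−1} P_1 = P_n T^{n−1} for 1 ≤ n ≤ p. -/
open ContinuousLinearMap
set_option linter.unusedSectionVars false

section Aux
variable {H : Type*} [NormedAddCommGroup H] [InnerProductSpace ℂ H] [CompleteSpace H]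
variable {T S : H →L[ℂ] H}

private lemma tsp_h1 (h1 : ∀ n, T ^ n * S ^ n * T ^ n = T ^ n) :
    ∀ n, T ^ n * (S ^ n * T ^ n) = T ^ n := by
  intro n; have := h1 n; rwa [mul_assoc] at this

private lemma tsp_h2 (hstar : star T = S) (h1 : ∀ n, T ^ n * S ^ n * T ^ n = T ^ n) :
    ∀ n, S ^ n * (T ^ n * S ^ n) = S ^ n := by
  intro n
  have hS : star S = T := by rw [← hstar, star_star]
  have := congrArg star (h1 n)
  simpa [star_mul, star_pow, hstar, hS, mul_assoc] using this

private lemma tsp_h1' (h1 : ∀ n, T ^ n * S ^ n * T ^ n = T ^ n) :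
    ∀ n (X : H →L[ℂ] H), T ^ n * (S ^ n * (T ^ n * X)) = T ^ n * X := by
  intro n X
  have := congrArg (· * X) (h1 n)
  simpa [mul_assoc] using this

private lemma tsp_h2' (hstar : star T = S) (h1 : ∀ n, T ^ n * S ^ n * T ^ n = T ^ n) :
    ∀ n (X : H →L[ℂ] H), S ^ n * (T ^ n * (S ^ n * X)) = S ^ n * X := by
  intro n X
  have := congrArg (· * X) (tsp_h2 hstar h1 n)
  simpa [mul_assoc] using this

private lemma tsp_Esa (hstar : star T = S) :
    ∀ a, star (T ^ a * S ^ a) = T ^ a * S ^ a := by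
  intro a
  have hS : star S = T := by rw [← hstar, star_star]
  simp [star_mul, star_pow, hstar, hS]

private lemma tsp_Fsa (hstar : star T = S) :
    ∀ a, star (S ^ a * T ^ a) = S ^ a * T ^ a := by
  intro a
  have hS : star S = T := by rw [← hstar, star_star]
  simp [star_mul, star_pow, hstar, hS]

private lemma tsp_EE (h1 : ∀ n, T ^ n * S ^ n * T ^ n = T ^ n) :
    ∀ a b, a ≤ b → (T ^ a * S ^ a) * (T ^ b * S ^ b) = T ^ b * S ^ b := by
  intro a b hab
  obtain ⟨c, rfl⟩ := Nat.exists_eq_add_of_le hab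
  simp only [pow_add, mul_assoc]
  rw [tsp_h1' h1]

private lemma tsp_FF (hstar : star T = S) (h1 : ∀ n, T ^ n * S ^ n * T ^ n = T ^ n) :
    ∀ a b, a ≤ b → (S ^ a * T ^ a) * (S ^ b * T ^ b) = S ^ b * T ^ b := by
  intro a b hab
  obtain ⟨c, rfl⟩ := Nat.exists_eq_add_of_le hab
  simp only [pow_add, mul_assoc]
  rw [tsp_h2' hstar h1]

private lemma tsp_EE' (hstar : star T = S) (h1 : ∀ n, T ^ n * S ^ n * T ^ n = T ^ n) :
    ∀ a b, a ≤ b → (T ^ b * S ^ b) * (T ^ a * S ^ a) = T ^ b * S ^ b := by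
  intro a b hab
  have h := congrArg star (tsp_EE h1 a b hab)
  rwa [star_mul, tsp_Esa hstar, tsp_Esa hstar] at h

private lemma tsp_FF' (hstar : star T = S) (h1 : ∀ n, T ^ n * S ^ n * T ^ n = T ^ n) :
    ∀ a b, a ≤ b → (S ^ b * T ^ b) * (S ^ a * T ^ a) = S ^ b * T ^ b := by
  intro a b hab
  have h := congrArg star (tsp_FF hstar h1 a b hab)
  rwa [star_mul, tsp_Fsa hstar, tsp_Fsa hstar] at h


private lemma tsp_comm_of_mul_idem (P Q : H →L[ℂ] H) (hPs : star P = P) (hQs : star Q = Q)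
    (hP : P * P = P) (hQ : Q * Q = Q) (hPQ : (P * Q) * (P * Q) = P * Q) :
    P * Q = Q * P := by
  have hD : (P * Q - P * (Q * P)) * star (P * Q - P * (Q * P)) = 0 := by
    have hP' : ∀ X : H →L[ℂ] H, P * (P * X) = P * X := fun X => by rw [← mul_assoc, hP]
    have hQ' : ∀ X : H →L[ℂ] H, Q * (Q * X) = Q * X := fun X => by rw [← mul_assoc, hQ]
    have hPQ' : ∀ X : H →L[ℂ] H, P * (Q * (P * (Q * X))) = P * (Q * X) := fun X => by
      have := congrArg (· * X) hPQ
      simpa [mul_assoc] using this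
    have hQP : (Q * P) * (Q * P) = Q * P := by
      have := congrArg star hPQ
      simpa [star_mul, hPs, hQs, mul_assoc] using this
    have hQP' : ∀ X : H →L[ℂ] H, Q * (P * (Q * (P * X))) = Q * (P * X) := fun X => by
      have := congrArg (· * X) hQP
      simpa [mul_assoc] using this
    simp only [star_sub, star_mul, hPs, hQs]
    simp only [mul_sub, sub_mul, mul_assoc, hP', hQ', hPQ', hQP']
    abel
  have key : P * Q = P * (Q * P) :=
    sub_eq_zero.mp ((CStarRing.mul_star_self_eq_zero_iff _).mp hD)
  have key2 : Q * P = P * (Q * P) := by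
    have h := congrArg star key
    simpa [star_mul, hPs, hQs, mul_assoc] using h
  exact key.trans key2.symm

private lemma tsp_merge (A : H →L[ℂ] H) (i j : ℕ) (X : H →L[ℂ] H) :
    A ^ i * (A ^ j * X) = A ^ (i + j) * X := by rw [← mul_assoc, ← pow_add]

private lemma tsp_EF (hstar : star T = S) (h1 : ∀ n, T ^ n * S ^ n * T ^ n = T ^ n) :
    ∀ a b, (T ^ a * S ^ a) * (S ^ b * T ^ b) = (S ^ b * T ^ b) * (T ^ a * S ^ a) := by
  intro a b
  apply tsp_comm_of_mul_idem _ _ (tsp_Esa hstar a) (tsp_Fsa hstar b)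
    (by simpa using tsp_EE h1 a a le_rfl) (by simpa using tsp_FF hstar h1 b b le_rfl)
  simp only [mul_assoc]
  rw [tsp_merge S a b, tsp_merge T b a, tsp_merge S a b, Nat.add_comm b a, tsp_h2' hstar h1 (a + b)]

private lemma tsp_dEsa (hstar : star T = S) :
    ∀ a, star (T ^ a * S ^ a - T ^ (a+1) * S ^ (a+1)) = T ^ a * S ^ a - T ^ (a+1) * S ^ (a+1) := by
  intro a; simp [star_sub, tsp_Esa hstar]

private lemma tsp_dFsa (hstar : star T = S) :
    ∀ a, star (S ^ a * T ^ a - S ^ (a+1) * T ^ (a+1)) = S ^ a * T ^ a - S ^ (a+1) * T ^ (a+1) := by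
  intro a; simp [star_sub, tsp_Fsa hstar]

private lemma tsp_dE_idem (hstar : star T = S) (h1 : ∀ n, T ^ n * S ^ n * T ^ n = T ^ n) :
    ∀ a, (T ^ a * S ^ a - T ^ (a+1) * S ^ (a+1)) * (T ^ a * S ^ a - T ^ (a+1) * S ^ (a+1))
      = T ^ a * S ^ a - T ^ (a+1) * S ^ (a+1) := by
  intro a
  simp only [mul_sub, sub_mul, tsp_EE h1 a a le_rfl, tsp_EE h1 a (a+1) (by omega),
    tsp_EE' hstar h1 a (a+1) (by omega), tsp_EE h1 (a+1) (a+1) le_rfl]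
  abel

private lemma tsp_dF_idem (hstar : star T = S) (h1 : ∀ n, T ^ n * S ^ n * T ^ n = T ^ n) :
    ∀ a, (S ^ a * T ^ a - S ^ (a+1) * T ^ (a+1)) * (S ^ a * T ^ a - S ^ (a+1) * T ^ (a+1))
      = S ^ a * T ^ a - S ^ (a+1) * T ^ (a+1) := by
  intro a
  simp only [mul_sub, sub_mul, tsp_FF hstar h1 a a le_rfl, tsp_FF hstar h1 a (a+1) (by omega),
    tsp_FF' hstar h1 a (a+1) (by omega), tsp_FF hstar h1 (a+1) (a+1) le_rfl]
  abel

private lemma tsp_dE_orth (hstar : star T = S) (h1 : ∀ n, T ^ n * S ^ n * T ^ n = T ^ n) :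
    ∀ a b, a ≠ b → (T ^ a * S ^ a - T ^ (a+1) * S ^ (a+1)) * (T ^ b * S ^ b - T ^ (b+1) * S ^ (b+1)) = 0 := by
  have main : ∀ a b, a < b →
      (T ^ a * S ^ a - T ^ (a+1) * S ^ (a+1)) * (T ^ b * S ^ b - T ^ (b+1) * S ^ (b+1)) = 0 := by
    intro a b h
    simp only [mul_sub, sub_mul, tsp_EE h1 a b h.le, tsp_EE h1 a (b+1) (by omega),
      tsp_EE h1 (a+1) b (by omega), tsp_EE h1 (a+1) (b+1) (by omega)]
    abel
  intro a b hab
  rcases Nat.lt_or_ge a b with h | h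
  · exact main a b h
  · have hba : b < a := by omega
    have := congrArg star (main b a hba)
    rwa [star_mul, tsp_dEsa hstar, tsp_dEsa hstar, star_zero] at this

private lemma tsp_dEF (hstar : star T = S) (h1 : ∀ n, T ^ n * S ^ n * T ^ n = T ^ n) :
    ∀ a b, (T ^ a * S ^ a - T ^ (a+1) * S ^ (a+1)) * (S ^ b * T ^ b - S ^ (b+1) * T ^ (b+1))
      = (S ^ b * T ^ b - S ^ (b+1) * T ^ (b+1)) * (T ^ a * S ^ a - T ^ (a+1) * S ^ (a+1)) := by
  intro a b
  simp only [mul_sub, sub_mul, tsp_EF hstar h1]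
  abel

private lemma tsp_dFE' (hstar : star T = S) (h1 : ∀ n, T ^ n * S ^ n * T ^ n = T ^ n) :
    ∀ a b (X : H →L[ℂ] H),
      (S ^ b * T ^ b - S ^ (b+1) * T ^ (b+1)) * ((T ^ a * S ^ a - T ^ (a+1) * S ^ (a+1)) * X)
      = (T ^ a * S ^ a - T ^ (a+1) * S ^ (a+1)) * ((S ^ b * T ^ b - S ^ (b+1) * T ^ (b+1)) * X) := by
  intro a b X
  rw [← mul_assoc, ← tsp_dEF hstar h1, mul_assoc]

private lemma tsp_dE_idem' (hstar : star T = S) (h1 : ∀ n, T ^ n * S ^ n * T ^ n = T ^ n) :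
    ∀ a (X : H →L[ℂ] H),
      (T ^ a * S ^ a - T ^ (a+1) * S ^ (a+1)) * ((T ^ a * S ^ a - T ^ (a+1) * S ^ (a+1)) * X)
      = (T ^ a * S ^ a - T ^ (a+1) * S ^ (a+1)) * X := by
  intro a X
  rw [← mul_assoc, tsp_dE_idem hstar h1]

private lemma tsp_PP (hstar : star T = S) (h1 : ∀ n, T ^ n * S ^ n * T ^ n = T ^ n) :
    ∀ a c b d, (a = b → c = d) →
      ((T ^ a * S ^ a - T ^ (a+1) * S ^ (a+1)) * (S ^ c * T ^ c - S ^ (c+1) * T ^ (c+1))) *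
        ((T ^ b * S ^ b - T ^ (b+1) * S ^ (b+1)) * (S ^ d * T ^ d - S ^ (d+1) * T ^ (d+1)))
      = if a = b then
          (T ^ a * S ^ a - T ^ (a+1) * S ^ (a+1)) * (S ^ c * T ^ c - S ^ (c+1) * T ^ (c+1))
        else 0 := by
  intro a c b d hcd
  by_cases hab : a = b
  · subst hab
    have : d = c := (hcd rfl).symm
    subst this
    rw [if_pos rfl]
    simp only [mul_assoc]
    rw [tsp_dFE' hstar h1, tsp_dF_idem hstar h1, tsp_dE_idem' hstar h1]
  · rw [if_neg hab]
    simp only [mul_assoc]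
    rw [tsp_dFE' hstar h1, ← mul_assoc, tsp_dE_orth hstar h1 a b hab, zero_mul]

private lemma tsp_word : ∀ k m : ℕ,
    T ^ k * ((T ^ 0 * S ^ 0 - T ^ 1 * S ^ 1) * (S ^ (k+m) * T ^ (k+m) - S ^ (k+m+1) * T ^ (k+m+1)))
    = ((T ^ k * S ^ k - T ^ (k+1) * S ^ (k+1)) * (S ^ m * T ^ m - S ^ (m+1) * T ^ (m+1))) * T ^ k := by
  intro k m
  simp only [pow_zero, one_mul, mul_one, mul_sub, sub_mul, mul_assoc]
  simp only [tsp_merge, ← pow_add]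
  simp only [Nat.add_comm, Nat.add_left_comm, Nat.add_assoc]
end Aux

/-- For a power partial isometry `T` and `p ≥ 2`, the operators
`P_n = (T^{n−1} T*^{n−1} − T^n T*^n)(T*^{p−n} T^{p−n} − T*^{p−n+1} T^{p−n+1})`,
`1 ≤ n ≤ p`, are mutually orthogonal projections, and `T^{n−1} P_1 = P_n T^{n−1}`. -/
theorem truncated_shift_projections
    {H : Type*} [NormedAddCommGroup H] [InnerProductSpace ℂ H] [CompleteSpace H]
    (T : H →L[ℂ] H)
    (hT : ∀ n : ℕ, T ^ n * (adjoint T) ^ n * T ^ n = T ^ n)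
    (p : ℕ) (hp : 2 ≤ p)
    (P : ℕ → (H →L[ℂ] H))
    (hPdef : ∀ n, P n =
      (T ^ (n - 1) * (adjoint T) ^ (n - 1) - T ^ n * (adjoint T) ^ n) *
        ((adjoint T) ^ (p - n) * T ^ (p - n)
          - (adjoint T) ^ (p - n + 1) * T ^ (p - n + 1))) :
    (∀ n, 1 ≤ n → n ≤ p → IsSelfAdjoint (P n)) ∧
    (∀ m n, 1 ≤ m → m ≤ p → 1 ≤ n → n ≤ p →
      P m * P n = if m = n then P m else 0) ∧
    (∀ n, 1 ≤ n → n ≤ p → T ^ (n - 1) * P 1 = P n * T ^ (n - 1)) := by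
  have hstar : star T = adjoint T := star_eq_adjoint T
  refine ⟨?_, ?_, ?_⟩
  · intro n h1n hnp
    obtain ⟨a, rfl⟩ : ∃ a, n = a + 1 := ⟨n - 1, by omega⟩
    rw [hPdef]
    simp only [Nat.add_sub_cancel]
    show star _ = _
    rw [star_mul, tsp_dEsa hstar, tsp_dFsa hstar]
    exact (tsp_dEF hstar hT a _).symm
  · intro m n h1m hmp h1n hnp
    obtain ⟨a, rfl⟩ : ∃ a, m = a + 1 := ⟨m - 1, by omega⟩
    obtain ⟨b, rfl⟩ : ∃ b, n = b + 1 := ⟨n - 1, by omega⟩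
    rw [hPdef, hPdef]
    simp only [Nat.add_sub_cancel]
    rw [tsp_PP hstar hT a (p - (a+1)) b (p - (b+1)) (fun h => by omega)]
    by_cases hab : a = b
    · subst hab; simp
    · rw [if_neg hab, if_neg (by omega)]
  · intro n h1n hnp
    obtain ⟨k, rfl⟩ : ∃ k, n = k + 1 := ⟨n - 1, by omega⟩
    obtain ⟨m, rfl⟩ : ∃ m, p = (k + 1) + m := ⟨p - (k + 1), by omega⟩
    rw [hPdef 1, hPdef (k + 1)]
    have e1 : (1 : ℕ) - 1 = 0 := rfl
    have e2 : k + 1 + m - 1 = k + m := by omega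
    have e3 : k + 1 + m - (k + 1) = m := by omega
    simp only [Nat.add_sub_cancel, e1, e2, e3]
    exact tsp_word k m
end

section
/- Let T be a power partial isometry on H and define Q_{m,n} = (T^m T*^m − T^{m+1} T*^{m+1})(T*^n T^n − T*^{n+1} T^{n+1}) for m, n ≥ 0. Then the Q_{m,n} are mutually orthogonal projections and ∑_{m=0}^M ∑_{n=0}^N Q_{m,n} = (1 − T^{M+1} T*^{M+1})(1 − T*^{N+1} T^{N+1}). -/
open ContinuousLinearMap

/-- For a power partial isometry `T`, the operators
`Q_{m,n} = (T^m T*^m − T^{m+1} T*^{m+1})(T*^n T^n − T*^{n+1} T^{n+1})` are mutually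
orthogonal projections, and their partial sums telescope:
`∑_{m=0}^{M} ∑_{n=0}^{N} Q_{m,n} = (1 − T^{M+1} T*^{M+1})(1 − T*^{N+1} T^{N+1})`. -/
theorem double_family_projections
    {H : Type*} [NormedAddCommGroup H] [InnerProductSpace ℂ H] [CompleteSpace H]
    (T : H →L[ℂ] H)
    (hT : ∀ n : ℕ, T ^ n * (adjoint T) ^ n * T ^ n = T ^ n)
    (Q : ℕ → ℕ → (H →L[ℂ] H))
    (hQdef : ∀ m n, Q m n =
      (T ^ m * (adjoint T) ^ m - T ^ (m + 1) * (adjoint T) ^ (m + 1)) *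
        ((adjoint T) ^ n * T ^ n - (adjoint T) ^ (n + 1) * T ^ (n + 1))) :
    (∀ m n, IsSelfAdjoint (Q m n)) ∧
    (∀ m n m' n', Q m n * Q m' n' = if m = m' ∧ n = n' then Q m n else 0) ∧
    (∀ M N : ℕ,
      ∑ m ∈ Finset.range (M + 1), ∑ n ∈ Finset.range (N + 1), Q m n =
        (1 - T ^ (M + 1) * (adjoint T) ^ (M + 1)) *
          (1 - (adjoint T) ^ (N + 1) * T ^ (N + 1))) := by
  set S := adjoint T with hSdef
  have hstarT : star T = S := star_eq_adjoint T
  have hstarS : star S = T := by rw [hSdef, ← star_eq_adjoint, star_star]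
  -- the adjoint version of the power partial isometry identity
  have hTs : ∀ k : ℕ, S ^ k * T ^ k * S ^ k = S ^ k := by
    intro k
    have h := congrArg star (hT k)
    simpa [star_mul, star_pow, hstarT, hstarS, mul_assoc] using h
  -- associativity-flexible versions
  have hTs' : ∀ (k : ℕ) (x : H →L[ℂ] H), S ^ k * (T ^ k * (S ^ k * x)) = S ^ k * x := by
    intro k x; rw [← mul_assoc, ← mul_assoc, hTs k]
  have hTs0 : ∀ k : ℕ, S ^ k * (T ^ k * S ^ k) = S ^ k := fun k => by rw [← mul_assoc, hTs k]
  -- the range and source projections are self-adjoint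
  have hEsa : ∀ k : ℕ, star (T ^ k * S ^ k) = T ^ k * S ^ k := by
    intro k; simp [star_mul, star_pow, hstarT, hstarS]
  have hFsa : ∀ k : ℕ, star (S ^ k * T ^ k) = S ^ k * T ^ k := by
    intro k; simp [star_mul, star_pow, hstarT, hstarS]
  -- products of range projections
  have hE_ge : ∀ a k : ℕ, (T ^ (a+k) * S ^ (a+k)) * (T ^ a * S ^ a) = T ^ (a+k) * S ^ (a+k) := by
    intro a k
    have h1 : S ^ (a+k) = S ^ k * S ^ a := by rw [← pow_add, add_comm]
    rw [h1]
    simp only [mul_assoc, hTs0]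
  have hE_le : ∀ a k : ℕ, (T ^ a * S ^ a) * (T ^ (a+k) * S ^ (a+k)) = T ^ (a+k) * S ^ (a+k) := by
    intro a k
    have h := congrArg star (hE_ge a k)
    rw [star_mul, hEsa a, hEsa (a+k)] at h
    exact h
  have hEmul : ∀ a b : ℕ, (T ^ a * S ^ a) * (T ^ b * S ^ b) = T ^ (max a b) * S ^ (max a b) := by
    intro a b
    rcases le_total a b with h | h
    · obtain ⟨k, rfl⟩ := Nat.exists_eq_add_of_le h
      rw [max_eq_right h]; exact hE_le a k
    · obtain ⟨k, rfl⟩ := Nat.exists_eq_add_of_le h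
      rw [max_eq_left h]; exact hE_ge b k
  -- products of source projections
  have hF_le : ∀ a k : ℕ, (S ^ a * T ^ a) * (S ^ (a+k) * T ^ (a+k)) = S ^ (a+k) * T ^ (a+k) := by
    intro a k
    have h1 : S ^ (a+k) = S ^ a * S ^ k := pow_add S a k
    have h2 : T ^ (a+k) = T ^ k * T ^ a := by rw [← pow_add, add_comm]
    rw [h1, h2]
    simp only [mul_assoc, hTs']
  have hF_ge : ∀ a k : ℕ, (S ^ (a+k) * T ^ (a+k)) * (S ^ a * T ^ a) = S ^ (a+k) * T ^ (a+k) := by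
    intro a k
    have h := congrArg star (hF_le a k)
    rw [star_mul, hFsa a, hFsa (a+k)] at h
    exact h
  have hFmul : ∀ a b : ℕ, (S ^ a * T ^ a) * (S ^ b * T ^ b) = S ^ (max a b) * T ^ (max a b) := by
    intro a b
    rcases le_total a b with h | h
    · obtain ⟨k, rfl⟩ := Nat.exists_eq_add_of_le h
      rw [max_eq_right h]; exact hF_le a k
    · obtain ⟨k, rfl⟩ := Nat.exists_eq_add_of_le h
      rw [max_eq_left h]; exact hF_ge b k
  -- range projections commute with source projections (Halmos–Wallen)
  have hEF : ∀ m n : ℕ, (T ^ m * S ^ m) * (S ^ n * T ^ n) = (S ^ n * T ^ n) * (T ^ m * S ^ m) := by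
    intro m n
    set X : H →L[ℂ] H := S ^ n * (T ^ n * (T ^ m * S ^ m)) with hXdef
    have hFE : (S ^ n * T ^ n) * (T ^ m * S ^ m) = X := by
      rw [hXdef]; simp only [mul_assoc]
    have hsX : star X = (T ^ m * S ^ m) * (S ^ n * T ^ n) := by
      rw [← hFE, star_mul, hEsa, hFsa]
    have hsX' : star X = T ^ m * (S ^ m * (S ^ n * T ^ n)) := by
      rw [hsX]; simp only [mul_assoc]
    have hmix : ∀ x : H →L[ℂ] H,
        S ^ m * (S ^ n * (T ^ n * (T ^ m * (S ^ m * (S ^ n * x))))) = S ^ m * (S ^ n * x) := by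
      intro x
      have h := hTs' (m + n) x
      rw [show S ^ (m+n) = S ^ m * S ^ n from pow_add S m n,
          show T ^ (m+n) = T ^ n * T ^ m from by rw [← pow_add, add_comm]] at h
      simp only [mul_assoc] at h
      exact h
    have h1 : X * star X = S ^ n * (T ^ n * (T ^ m * (S ^ m * (S ^ n * T ^ n)))) := by
      rw [hsX', hXdef]
      simp only [mul_assoc, hTs']
    have h2 : X * ((S ^ n * T ^ n) * star X)
        = S ^ n * (T ^ n * (T ^ m * (S ^ m * (S ^ n * T ^ n)))) := by
      rw [hsX', hXdef]
      simp only [mul_assoc, hmix]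
    have hstD : star (1 - S ^ n * T ^ n) = 1 - S ^ n * T ^ n := by
      rw [star_sub, star_one, hFsa]
    have hidem : (1 - S ^ n * T ^ n) * (1 - S ^ n * T ^ n) = 1 - S ^ n * T ^ n := by
      have h := hFmul n n
      simp only [max_self] at h
      rw [sub_mul, mul_sub, mul_sub, one_mul, mul_one, h]
      abel
    have hZ : (X * (1 - S ^ n * T ^ n)) * star (X * (1 - S ^ n * T ^ n)) = 0 := by
      rw [star_mul, hstD, mul_assoc, ← mul_assoc (1 - S ^ n * T ^ n), hidem,
        sub_mul, one_mul, mul_sub, h1, h2, sub_self]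
    have hD : X * (1 - S ^ n * T ^ n) = 0 :=
      (CStarRing.mul_star_self_eq_zero_iff _).mp hZ
    have hXF : X * (S ^ n * T ^ n) = X := by
      have h := hD
      rw [mul_sub, mul_one, sub_eq_zero] at h
      exact h.symm
    have hXsa : star X = X :=
      calc star X = star (X * (S ^ n * T ^ n)) := by rw [hXF]
        _ = (S ^ n * T ^ n) * star X := by rw [star_mul, hFsa]
        _ = (S ^ n * T ^ n) * (T ^ m * S ^ m * (S ^ n * T ^ n)) := by rw [hsX]
        _ = (S ^ n * T ^ n * (T ^ m * S ^ m)) * (S ^ n * T ^ n) := by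
            simp only [mul_assoc]
        _ = X * (S ^ n * T ^ n) := by rw [hFE]
        _ = X := hXF
    rw [← hsX, hXsa, hFE]
  -- the double family
  set A : ℕ → (H →L[ℂ] H) := fun m => T ^ m * S ^ m - T ^ (m + 1) * S ^ (m + 1) with hAdef
  set B : ℕ → (H →L[ℂ] H) := fun n => S ^ n * T ^ n - S ^ (n + 1) * T ^ (n + 1) with hBdef
  have hQ : ∀ m n, Q m n = A m * B n := by
    intro m n
    simp only [hAdef, hBdef]
    exact hQdef m n
  have hAsa : ∀ m, star (A m) = A m := by
    intro m; simp only [hAdef, star_sub, hEsa]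
  have hBsa : ∀ n, star (B n) = B n := by
    intro n; simp only [hBdef, star_sub, hFsa]
  have hABcomm : ∀ m n, A m * B n = B n * A m := by
    intro m n
    simp only [hAdef, hBdef, sub_mul, mul_sub, hEF]
    abel
  have hAmul : ∀ a b, A a * A b = if a = b then A a else 0 := by
    intro a b
    have expand : A a * A b =
        (T ^ (max a b) * S ^ (max a b) - T ^ (max a (b+1)) * S ^ (max a (b+1)))
          - (T ^ (max (a+1) b) * S ^ (max (a+1) b)
              - T ^ (max (a+1) (b+1)) * S ^ (max (a+1) (b+1))) := by
      simp only [hAdef, sub_mul, mul_sub, hEmul]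
      abel
    rcases lt_trichotomy a b with h | rfl | h
    · rw [if_neg h.ne, expand, max_eq_right h.le,
        max_eq_right (by omega : a ≤ b + 1), max_eq_right (by omega : a + 1 ≤ b),
        max_eq_right (by omega : a + 1 ≤ b + 1)]
      abel
    · rw [if_pos rfl, expand, max_self, max_eq_right (by omega : a ≤ a + 1),
        max_eq_left (by omega : a ≤ a + 1), max_self]
      simp only [hAdef]
      abel
    · rw [if_neg h.ne', expand, max_eq_left h.le,
        max_eq_left (by omega : b + 1 ≤ a), max_eq_left (by omega : b ≤ a + 1),
        max_eq_left (by omega : b + 1 ≤ a + 1)]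
      abel
  have hBmul : ∀ a b, B a * B b = if a = b then B a else 0 := by
    intro a b
    have expand : B a * B b =
        (S ^ (max a b) * T ^ (max a b) - S ^ (max a (b+1)) * T ^ (max a (b+1)))
          - (S ^ (max (a+1) b) * T ^ (max (a+1) b)
              - S ^ (max (a+1) (b+1)) * T ^ (max (a+1) (b+1))) := by
      simp only [hBdef, sub_mul, mul_sub, hFmul]
      abel
    rcases lt_trichotomy a b with h | rfl | h
    · rw [if_neg h.ne, expand, max_eq_right h.le,
        max_eq_right (by omega : a ≤ b + 1), max_eq_right (by omega : a + 1 ≤ b),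
        max_eq_right (by omega : a + 1 ≤ b + 1)]
      abel
    · rw [if_pos rfl, expand, max_self, max_eq_right (by omega : a ≤ a + 1),
        max_eq_left (by omega : a ≤ a + 1), max_self]
      simp only [hBdef]
      abel
    · rw [if_neg h.ne', expand, max_eq_left h.le,
        max_eq_left (by omega : b + 1 ≤ a), max_eq_left (by omega : b ≤ a + 1),
        max_eq_left (by omega : b + 1 ≤ a + 1)]
      abel
  refine ⟨?_, ?_, ?_⟩
  · intro m n
    show star (Q m n) = Q m n
    rw [hQ, star_mul, hAsa, hBsa, hABcomm]
  · intro m n m' n'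
    rw [hQ, hQ, mul_assoc, ← mul_assoc (B n), ← hABcomm m' n, mul_assoc (A m'),
      ← mul_assoc, hAmul, hBmul]
    by_cases h1 : m = m' <;> by_cases h2 : n = n' <;>
      simp [h1, h2, hQ]
  · intro M N
    have hAsum : ∑ m ∈ Finset.range (M + 1), A m = 1 - T ^ (M + 1) * S ^ (M + 1) := by
      have h := Finset.sum_range_sub' (fun k => T ^ k * S ^ k) (M + 1)
      simpa [hAdef] using h
    have hBsum : ∑ n ∈ Finset.range (N + 1), B n = 1 - S ^ (N + 1) * T ^ (N + 1) := by
      have h := Finset.sum_range_sub' (fun k => S ^ k * T ^ k) (N + 1)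
      simpa [hBdef] using h
    calc ∑ m ∈ Finset.range (M + 1), ∑ n ∈ Finset.range (N + 1), Q m n
        = ∑ m ∈ Finset.range (M + 1), (A m * ∑ n ∈ Finset.range (N + 1), B n) := by
          simp only [hQ, Finset.mul_sum]
      _ = (∑ m ∈ Finset.range (M + 1), A m) * (∑ n ∈ Finset.range (N + 1), B n) := by
          rw [Finset.sum_mul]
      _ = (1 - T ^ (M + 1) * S ^ (M + 1)) * (1 - S ^ (N + 1) * T ^ (N + 1)) := by
          rw [hAsum, hBsum]
end
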